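/- arXiv:1709.06650 — 2 statements merged into one kernel-verified Lean document; each statement's English description precedes it below -/
import Mathlib

section
/- Every linear threshold function f : {-1,1}^n → {-1,1} satisfies I[f] ≤ √n. -/
open Finset
open scoped Classical

noncomputable section

/-- The Boolean cube `{-1,1}^V` as a finset of functions `V → ℤ`. -/
def cube (V : Type*) [Fintype V] [DecidableEq V] : Finset (V → ℤ) :=
  Fintype.piFinset fun _ => ({-1, 1} : Finset ℤ)

/-- Negate the `i`-th coordinate. -/
def flipAt {V : Type*} [DecidableEq V] (x : V → ℤ) (i : V) : V → ℤ :=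
  Function.update x i (-(x i))

/-- Influence of coordinate `i` on `f`: the probability over a uniform point of the cube
that flipping coordinate `i` changes the value of `f`. -/
def coordInf {V : Type*} [Fintype V] [DecidableEq V] {α : Type*} (f : (V → ℤ) → α) (i : V) : ℝ :=
  (∑ x ∈ cube V, if f x ≠ f (flipAt x i) then (1 : ℝ) else 0) / (cube V).card

/-- Total influence of `f`. -/
def totalInf {V : Type*} [Fintype V] [DecidableEq V] {α : Type*} (f : (V → ℤ) → α) : ℝ :=
  ∑ i : V, coordInf f i

/-- Sign function, with `sgn 0 = 0`. -/
def sgn (t : ℝ) : ℤ := if 0 < t then 1 else if t < 0 then -1 else 0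

/-- A quadratic multilinear polynomial `∑_{i<j} a_{ij} x_i x_j + ∑_i b_i x_i + c`. -/
def quadPoly {V : Type*} [Fintype V] [LinearOrder V] (a : V → V → ℝ) (b : V → ℝ) (c : ℝ)
    (x : V → ℤ) : ℝ :=
  (∑ i : V, ∑ j : V, if i < j then a i j * x i * x j else 0) + (∑ i : V, b i * x i) + c

/-- `f` is a QTF supported on the graph `G`: it has a quadratic representation whose
cross terms only involve edges of `G`, and whose polynomial is nonvanishing on the cube. -/
def IsQTFSupportedOn {V : Type*} [Fintype V] [LinearOrder V] (G : SimpleGraph V)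
    (f : (V → ℤ) → ℤ) : Prop :=
  ∃ a b c, (∀ i j : V, i < j → a i j ≠ 0 → G.Adj i j) ∧
    (∀ x ∈ cube V, quadPoly a b c x ≠ 0) ∧
    (∀ x ∈ cube V, f x = sgn (quadPoly a b c x))

/-!
Flipping `xᵢ` moves `a₀ + ∑ aⱼ xⱼ` by `2 aᵢ xᵢ`, so an LTF can only change value in the direction
of `sgn(aᵢ) xᵢ`: it is unate, hence `Inf_i[f] = sgn(aᵢ) E[f(x) xᵢ]`. Summing,
`I[f] = E[f(x) T(x)]` for `T = ∑ sgn(aᵢ) xᵢ`, and Cauchy–Schwarz together with the orthogonality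
of the coordinates gives `E[f T] ≤ √(E[T²]) = √(∑ sgn(aᵢ)²) ≤ √n`.
-/

section Cube

variable {V : Type*} [DecidableEq V]

@[simp]
lemma flipAt_apply_self (x : V → ℤ) (i : V) : flipAt x i i = -x i := by
  simp [flipAt]

lemma flipAt_apply_of_ne (x : V → ℤ) {i j : V} (h : j ≠ i) : flipAt x i j = x j :=
  Function.update_of_ne h _ _

@[simp]
lemma flipAt_flipAt (x : V → ℤ) (i : V) : flipAt (flipAt x i) i = x := by
  ext j
  rcases eq_or_ne j i with rfl | h
  · simp
  · simp [flipAt_apply_of_ne _ h]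

variable [Fintype V]

lemma sum_mul_flipAt_apply (a : V → ℝ) (x : V → ℤ) (i : V) :
    ∑ j, a j * flipAt x i j = ∑ j, a j * x j - 2 * (a i * x i) := by
  have h : ∀ j, a j * flipAt x i j = a j * x j - if j = i then 2 * (a i * x i) else 0 := by
    intro j
    rcases eq_or_ne j i with rfl | h
    · simp only [flipAt_apply_self, Int.cast_neg, if_true]
      ring
    · simp [flipAt_apply_of_ne _ h, h]
  simp [h, sum_sub_distrib]

lemma mem_cube {x : V → ℤ} : x ∈ cube V ↔ ∀ i, x i = -1 ∨ x i = 1 := by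
  simp [cube, Fintype.mem_piFinset]

lemma card_cube_pos : (0 : ℝ) < (cube V).card := by
  have : (cube V).Nonempty := Fintype.piFinset_nonempty.mpr fun _ => insert_nonempty _ _
  exact_mod_cast this.card_pos

lemma coord_sq_of_mem_cube {x : V → ℤ} (hx : x ∈ cube V) (i : V) : (x i : ℝ) ^ 2 = 1 := by
  rcases mem_cube.mp hx i with h | h <;> simp [h]

lemma flipAt_mem_cube {x : V → ℤ} (hx : x ∈ cube V) (i : V) : flipAt x i ∈ cube V := by
  rw [mem_cube] at hx ⊢
  intro j
  rcases eq_or_ne j i with rfl | h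
  · rcases hx j with h | h <;> simp [h]
  · rw [flipAt_apply_of_ne x h]
    exact hx j

lemma sum_cube_comp_flipAt {M : Type*} [AddCommMonoid M] (i : V) (g : (V → ℤ) → M) :
    ∑ x ∈ cube V, g (flipAt x i) = ∑ x ∈ cube V, g x :=
  sum_nbij' (flipAt · i) (flipAt · i) (fun _ hx => flipAt_mem_cube hx i)
    (fun _ hx => flipAt_mem_cube hx i) (fun x _ => flipAt_flipAt x i)
    (fun x _ => flipAt_flipAt x i) (fun _ _ => rfl)

lemma sum_cube_coord_mul_coord (i j : V) :
    ∑ x ∈ cube V, (x i * x j : ℝ) = if i = j then ((cube V).card : ℝ) else 0 := by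
  split_ifs with hij
  · subst hij
    simp [← sq, sum_congr rfl fun x hx => coord_sq_of_mem_cube hx i]
  · -- flipping coordinate `i` negates every summand
    have h := sum_cube_comp_flipAt i fun x => (x i * x j : ℝ)
    simp only [flipAt_apply_self, flipAt_apply_of_ne _ (Ne.symm hij), Int.cast_neg, neg_mul,
      sum_neg_distrib] at h
    linarith

lemma sum_cube_linear_sq (c : V → ℝ) :
    ∑ x ∈ cube V, (∑ i, c i * x i) ^ 2 = (cube V).card * ∑ i, c i ^ 2 := by
  calc ∑ x ∈ cube V, (∑ i, c i * x i) ^ 2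
      = ∑ i, ∑ j, c i * c j * ∑ x ∈ cube V, (x i * x j : ℝ) := by
        simp_rw [sq, sum_mul_sum, mul_sum]
        rw [sum_comm]
        refine sum_congr rfl fun i _ => ?_
        rw [sum_comm]
        exact sum_congr rfl fun j _ => sum_congr rfl fun x _ => by ring
    _ = (cube V).card * ∑ i, c i ^ 2 := by
        simp [sum_cube_coord_mul_coord, sq, sum_mul, mul_comm]

lemma sum_cube_mul_linear_le (g : (V → ℤ) → ℝ) (hg : ∀ x ∈ cube V, g x ^ 2 ≤ 1) (c : V → ℝ) :
    ∑ x ∈ cube V, g x * ∑ i, c i * x i ≤ (cube V).card * √(∑ i, c i ^ 2) := by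
  have hg2 : ∑ x ∈ cube V, g x ^ 2 ≤ (cube V).card := by
    simpa using sum_le_sum hg
  have cauchy_schwarz := sum_mul_sq_le_sq_mul_sq (cube V) g fun x => ∑ i, c i * x i
  rw [sum_cube_linear_sq] at cauchy_schwarz
  have hc : 0 ≤ ∑ i, c i ^ 2 := sum_nonneg fun i _ => sq_nonneg (c i)
  calc _ ≤ |∑ x ∈ cube V, g x * ∑ i, c i * x i| := le_abs_self _
    _ ≤ √((cube V).card ^ 2 * ∑ i, c i ^ 2) := by
        refine Real.abs_le_sqrt (cauchy_schwarz.trans ?_)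
        exact (mul_le_mul_of_nonneg_right hg2 (by positivity)).trans_eq (by ring)
    _ = _ := by rw [Real.sqrt_mul (sq_nonneg _), Real.sqrt_sq card_cube_pos.le]

end Cube

section Influence

variable {V : Type*} [Fintype V] [DecidableEq V]

lemma ite_ne_eq_mul_sub {u v t : ℤ} (hu : u = 1 ∨ u = -1) (hv : v = 1 ∨ v = -1)
    (h : u ≠ v → u = t) : (if u ≠ v then 2 else 0 : ℤ) = t * (u - v) := by
  split_ifs with huv
  · obtain rfl := h huv
    rcases hu with rfl | rfl <;> rcases hv with rfl | rfl <;> simp_all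
  · simp_all

lemma coordInf_eq_of_unate {f : (V → ℤ) → ℤ} {i : V} (s : ℤ)
    (hf : ∀ x ∈ cube V, f x = 1 ∨ f x = -1)
    (hs : ∀ x ∈ cube V, f x ≠ f (flipAt x i) → f x = s * x i) :
    coordInf f i = (∑ x ∈ cube V, (s * x i * f x : ℝ)) / (cube V).card := by
  set h : (V → ℤ) → ℝ := fun x => s * x i * f x
  have pointwise : ∀ x ∈ cube V,
      (if f x ≠ f (flipAt x i) then (1 : ℝ) else 0) = (h x + h (flipAt x i)) / 2 := by
    intro x hx
    have key := congrArg (Int.cast : ℤ → ℝ)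
      (ite_ne_eq_mul_sub (hf x hx) (hf _ (flipAt_mem_cube hx i)) (hs x hx))
    simp only [h, flipAt_apply_self, Int.cast_neg]
    push_cast at key
    split_ifs at key ⊢ <;> linear_combination key / 2
  rw [coordInf, div_left_inj' card_cube_pos.ne']
  calc _ = ∑ x ∈ cube V, (h x + h (flipAt x i)) / 2 :=
        sum_congr rfl fun x hx => by convert pointwise x hx
    _ = _ := by rw [← sum_div, sum_add_distrib, sum_cube_comp_flipAt]; ring

lemma totalInf_le_sqrt_sum_sq {f : (V → ℤ) → ℤ} (s : V → ℤ)
    (hf : ∀ x ∈ cube V, f x = 1 ∨ f x = -1)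
    (hs : ∀ i, ∀ x ∈ cube V, f x ≠ f (flipAt x i) → f x = s i * x i) :
    totalInf f ≤ √(∑ i, (s i : ℝ) ^ 2) := by
  have hf2 : ∀ x ∈ cube V, (f x : ℝ) ^ 2 ≤ 1 := fun x hx => by
    rcases hf x hx with h | h <;> simp [h]
  have htotal : totalInf f = (∑ x ∈ cube V, (f x : ℝ) * ∑ i, (s i : ℝ) * x i) / (cube V).card := by
    simp only [totalInf, coordInf_eq_of_unate _ hf (hs _), ← sum_div, mul_sum]
    rw [sum_comm]
    exact congrArg (· / _) (sum_congr rfl fun x _ => sum_congr rfl fun i _ => by ring)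
  rw [htotal, div_le_iff₀ card_cube_pos, mul_comm]
  exact sum_cube_mul_linear_le _ hf2 _

end Influence

section Threshold

lemma sgn_eq_one_or_neg_one {t : ℝ} (ht : t ≠ 0) : sgn t = 1 ∨ sgn t = -1 := by
  rcases ht.lt_or_gt with h | h <;> simp [sgn, h, h.not_gt]

lemma sgn_sq_le_one (t : ℝ) : (sgn t : ℝ) ^ 2 ≤ 1 := by
  unfold sgn
  split_ifs <;> norm_num

lemma sgn_mul_of_eq_one_or_neg_one (a : ℝ) {z : ℤ} (hz : z = 1 ∨ z = -1) :
    sgn (a * z) = sgn a * z := by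
  rcases hz with rfl | rfl
  · simp
  · push_cast
    unfold sgn
    split_ifs <;> first | rfl | (exfalso; linarith)

lemma sgn_eq_of_sgn_ne_sgn_sub {u b : ℝ} (hu : u ≠ 0) (hub : u - 2 * b ≠ 0)
    (h : sgn u ≠ sgn (u - 2 * b)) : sgn u = sgn b := by
  rcases hu.lt_or_gt with hu | hu <;> rcases hub.lt_or_gt with hub | hub <;>
    unfold sgn at h ⊢ <;> split_ifs at h ⊢ <;> first | rfl | (exfalso; linarith) | simp_all

variable {V : Type*} [Fintype V] [DecidableEq V]

lemma ltf_eq_of_ne_flipAt {a₀ : ℝ} {a : V → ℝ} (hnz : ∀ x ∈ cube V, a₀ + ∑ i, a i * x i ≠ 0)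
    {f : (V → ℤ) → ℤ} (hf : ∀ x ∈ cube V, f x = sgn (a₀ + ∑ i, a i * x i)) (i : V)
    {x : V → ℤ} (hx : x ∈ cube V) (hflip : f x ≠ f (flipAt x i)) : f x = sgn (a i) * x i := by
  have hx' := flipAt_mem_cube hx i
  have hnz' := hnz _ hx'
  rw [hf _ hx'] at hflip
  rw [sum_mul_flipAt_apply, ← add_sub_assoc] at hflip hnz'
  rw [hf x hx] at hflip ⊢
  rw [sgn_eq_of_sgn_ne_sgn_sub (hnz x hx) hnz' hflip]
  exact sgn_mul_of_eq_one_or_neg_one _ ((mem_cube.mp hx i).symm)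

end Threshold

/-- Every linear threshold function on `n` variables has total influence at most `√n`. -/
theorem ltf_influence_le_sqrt {n : ℕ} (a₀ : ℝ) (a : Fin n → ℝ)
    (hnz : ∀ x ∈ cube (Fin n), a₀ + ∑ i, a i * x i ≠ 0)
    (f : (Fin n → ℤ) → ℤ)
    (hf : ∀ x ∈ cube (Fin n), f x = sgn (a₀ + ∑ i, a i * x i)) :
    totalInf f ≤ Real.sqrt n := by
  have hpm : ∀ x ∈ cube (Fin n), f x = 1 ∨ f x = -1 := fun x hx =>
    hf x hx ▸ sgn_eq_one_or_neg_one (hnz x hx)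
  calc totalInf f ≤ √(∑ i, (sgn (a i) : ℝ) ^ 2) :=
        totalInf_le_sqrt_sum_sq _ hpm fun i _ hx => ltf_eq_of_ne_flipAt hnz hf i hx
    _ ≤ √n := Real.sqrt_le_sqrt <| by
        simpa using sum_le_sum (s := univ) fun i _ => sgn_sq_le_one (a i)
end
end

section
/- Let f : {-1,1}^n → {-1,1} be a symmetric QTF, i.e., a QTF invariant under all permutations of its n coordinates. Then I[f] ≤ n · 2^{-n+1} · C(n, (n-1)/2) if n is odd, and I[f] ≤ n · 2^{-n} · ( 2·C(n, (n-2)/2) + C(n, n/2) ) if n is even, where C(a,b) denotes the binomial coefficient. -/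
open Finset
open scoped Classical

noncomputable section

/-!
Since `f` is symmetric, `f x = g k` depends only on the number `k` of coordinates of `x` equal
to `1`. Summing a quadratic representation `p` of `f` over all permutations of the coordinates
gives a polynomial `P` of degree at most two in `s = ∑ i, x i = 2 k - n`, and on layer `k` all
the summands have the sign `g k`, hence so does `P (2 k - n)`. Every change of `g` between
layers `k` and `k + 1` therefore gives a root of `P` in `(2 k - n, 2 k + 2 - n)`, so `g` changes
at most twice. Flipping a coordinate moves between adjacent layers, and there are
`n * C(n - 1, k)` such edges between layers `k` and `k + 1`, so
`I[f] = 2 n 2^{-n} ∑ C(n - 1, k)` over the at most two changes `k`; two distinct entries of row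
`n - 1` of Pascal's triangle add up to at most the central entry `C(n, ⌊n / 2⌋)` of row `n`.
-/

section Cube

variable {V : Type*} [DecidableEq V]

variable [Fintype V]

lemma card_cube : #(cube V) = 2 ^ Fintype.card V := by
  simp [cube, Fintype.card_piFinset]

lemma comp_perm_mem_cube {x : V → ℤ} (hx : x ∈ cube V) (σ : Equiv.Perm V) :
    x ∘ σ ∈ cube V :=
  mem_cube.2 fun i => mem_cube.1 hx (σ i)

def numOnes (x : V → ℤ) : ℕ := #{i | x i = 1}

lemma numOnes_flipAt_add_one {x : V → ℤ} {i : V} (hi : x i = 1) :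
    numOnes (flipAt x i) + 1 = numOnes x := by
  have : ({j | flipAt x i j = 1} : Finset V) = ({j | x j = 1} : Finset V).erase i := by
    ext j
    rcases eq_or_ne j i with rfl | hj <;> simp [flipAt, *]
  rw [numOnes, this, card_erase_add_one (by simp [hi]), numOnes]

lemma sum_coe_eq_of_mem_cube {x : V → ℤ} (hx : x ∈ cube V) :
    ∑ i, (x i : ℝ) = 2 * numOnes x - Fintype.card V := by
  have h : ∀ i, (x i : ℝ) = 2 * (if x i = 1 then 1 else 0) - 1 := fun i => by
    rcases mem_cube.1 hx i with h | h <;> norm_num [h]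
  simp only [h, sum_sub_distrib, ← mul_sum, sum_boole, numOnes, sum_const, card_univ]
  simp

lemma card_filter_numOnes_eq (k : ℕ) :
    #{x ∈ cube V | numOnes x = k} = (Fintype.card V).choose k := by
  rw [← card_univ, ← card_powersetCard]
  refine card_bij' (fun x _ => ({i | x i = 1} : Finset V)) (fun S _ i => if i ∈ S then 1 else -1)
    ?_ ?_ ?_ ?_
  · intro x hx
    rw [mem_filter] at hx
    simpa [mem_powersetCard, numOnes] using hx.2
  · intro S hS
    rw [mem_powersetCard] at hS
    rw [mem_filter, mem_cube, numOnes]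
    refine ⟨fun i => by by_cases h : i ∈ S <;> simp [h], ?_⟩
    simpa using hS.2
  · intro x hx
    simp only [mem_filter, mem_cube] at hx
    funext i
    rcases hx.1 i with h | h <;> simp [h]
  · intro S _
    ext i
    by_cases h : i ∈ S <;> simp [h]

lemma exists_perm_comp_eq_of_numOnes_eq {x y : V → ℤ} (hx : x ∈ cube V) (hy : y ∈ cube V)
    (h : numOnes x = numOnes y) : ∃ σ : Equiv.Perm V, x ∘ σ = y := by
  have hpos : Fintype.card {i // y i = 1} = Fintype.card {i // x i = 1} := by
    simpa [Fintype.card_subtype, numOnes] using h.symm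
  have hneg : Fintype.card {i // ¬ y i = 1} = Fintype.card {i // ¬ x i = 1} := by
    rw [Fintype.card_subtype_compl, Fintype.card_subtype_compl, hpos]
  obtain ⟨e⟩ := Fintype.card_eq.1 hpos
  obtain ⟨e'⟩ := Fintype.card_eq.1 hneg
  refine ⟨Equiv.subtypeCongr e e', funext fun i => ?_⟩
  by_cases hi : y i = 1
  · simp [Equiv.subtypeCongr, Equiv.sumCompl, hi, (e ⟨i, hi⟩).2]
  · have hxi := (e' ⟨i, hi⟩).2
    have hyi := (mem_cube.1 hy i).resolve_right hi
    simp [Equiv.subtypeCongr, Equiv.sumCompl, hyi, (mem_cube.1 hx _).resolve_right hxi]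

lemma exists_eq_comp_numOnes {α : Type*} {f : (V → ℤ) → α}
    (hsym : ∀ σ : Equiv.Perm V, ∀ x ∈ cube V, f (x ∘ σ) = f x) :
    ∃ g : ℕ → α, ∀ x ∈ cube V, f x = g (numOnes x) := by
  refine ⟨fun k => if h : ∃ y ∈ cube V, numOnes y = k then f h.choose else f 0,
    fun x hx => ?_⟩
  have h : ∃ y ∈ cube V, numOnes y = numOnes x := ⟨x, hx, rfl⟩
  obtain ⟨hy, hyx⟩ := h.choose_spec
  obtain ⟨σ, hσ⟩ := exists_perm_comp_eq_of_numOnes_eq hy hx hyx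
  dsimp only
  rw [dif_pos h, ← hsym σ _ hy, hσ]

lemma exists_mem_cube_numOnes_eq {k : ℕ} (hk : k ≤ Fintype.card V) :
    ∃ x ∈ cube V, numOnes x = k := by
  have : 0 < #{x ∈ cube V | numOnes x = k} := by
    rw [card_filter_numOnes_eq]
    exact Nat.choose_pos hk
  obtain ⟨x, hx⟩ := card_pos.1 this
  exact ⟨x, (mem_filter.1 hx).1, (mem_filter.1 hx).2⟩

end Cube

section Influence

variable {V : Type*} [Fintype V] [DecidableEq V]

lemma sum_cube_eq_two_mul_sum_filter {F : (V → ℤ) → ℝ} (i : V)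
    (hF : ∀ x ∈ cube V, F (flipAt x i) = F x) :
    ∑ x ∈ cube V, F x = 2 * ∑ x ∈ cube V with x i = 1, F x := by
  rw [← sum_filter_add_sum_filter_not (cube V) (fun x => x i = 1), two_mul, add_right_inj]
  refine sum_nbij' (flipAt · i) (flipAt · i) ?_ ?_ (by simp) (by simp) fun x hx => ?_
  · intro x hx
    simp only [mem_filter] at hx ⊢
    refine ⟨flipAt_mem_cube hx.1 i, ?_⟩
    rcases mem_cube.1 hx.1 i with h | h
    · simp [flipAt, h]
    · exact absurd h hx.2
  · intro x hx
    simp only [mem_filter] at hx ⊢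
    exact ⟨flipAt_mem_cube hx.1 i, by simp [flipAt, hx.2]⟩
  · exact (hF x (mem_filter.1 hx).1).symm

lemma totalInf_eq_sum_sum_filter {α : Type*} (f : (V → ℤ) → α) :
    totalInf f = 2 * (∑ x ∈ cube V, ∑ i with x i = 1,
      if f x ≠ f (flipAt x i) then (1 : ℝ) else 0) / 2 ^ Fintype.card V := by
  simp only [totalInf, coordInf, card_cube, Nat.cast_pow, Nat.cast_ofNat, ← sum_div]
  rw [sum_congr rfl fun i _ => sum_cube_eq_two_mul_sum_filter
    (F := fun x => if f x ≠ f (flipAt x i) then (1 : ℝ) else 0) i fun x _ => by simp [ne_comm],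
    ← mul_sum, sum_comm' (t' := cube V) (s' := fun x => ({i | x i = 1} : Finset V))]
  intro x i
  simp [and_comm]

lemma sum_cube_comp_numOnes (h : ℕ → ℝ) :
    ∑ x ∈ cube V, h (numOnes x) =
      ∑ k ∈ range (Fintype.card V + 1), (Fintype.card V).choose k * h k := by
  rw [← sum_fiberwise_of_maps_to (g := numOnes) (t := range (Fintype.card V + 1))
    fun x _ => mem_range_succ_iff.2 (card_filter_le _ _)]
  refine sum_congr rfl fun k _ => ?_
  rw [sum_congr rfl fun x hx => by rw [(mem_filter.1 hx).2], sum_const,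
    card_filter_numOnes_eq, nsmul_eq_mul]

lemma sum_range_choose_mul_mul_eq (n : ℕ) (h : ℕ → ℝ) :
    ∑ k ∈ range (n + 1), (n.choose k : ℝ) * (k * h k) =
      n * ∑ k ∈ range n, ((n - 1).choose k : ℝ) * h (k + 1) := by
  rcases n with _ | m
  · simp
  rw [sum_range_succ', mul_sum]
  simp only [CharP.cast_eq_zero, zero_mul, mul_zero, add_zero, Nat.add_sub_cancel]
  refine sum_congr rfl fun k _ => ?_
  rw [← mul_assoc, ← mul_assoc]
  congr 1
  exact_mod_cast (Nat.add_one_mul_choose_eq m k).symm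

def changeSet {α : Type*} (g : ℕ → α) (n : ℕ) : Finset ℕ :=
  {k ∈ range n | g k ≠ g (k + 1)}

lemma mem_changeSet {α : Type*} {g : ℕ → α} {n k : ℕ} :
    k ∈ changeSet g n ↔ k < n ∧ g k ≠ g (k + 1) := by
  simp [changeSet]

lemma totalInf_eq_of_eq_comp_numOnes {α : Type*} {f : (V → ℤ) → α} {g : ℕ → α}
    (hfg : ∀ x ∈ cube V, f x = g (numOnes x)) :
    totalInf f = 2 * Fintype.card V *
      (∑ k ∈ changeSet g (Fintype.card V), ((Fintype.card V - 1).choose k : ℝ)) /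
        2 ^ Fintype.card V := by
  have hx : ∀ x ∈ cube V,
      (∑ i with x i = 1, if f x ≠ f (flipAt x i) then (1 : ℝ) else 0) =
        numOnes x * if g (numOnes x - 1) ≠ g (numOnes x) then 1 else 0 := fun x hx => by
    have hdown : ∀ i ∈ ({i | x i = 1} : Finset V), (if f x ≠ f (flipAt x i) then (1 : ℝ) else 0) =
        if g (numOnes x - 1) ≠ g (numOnes x) then 1 else 0 := fun i hi => by
      rw [hfg x hx, hfg _ (flipAt_mem_cube hx i), ← numOnes_flipAt_add_one (mem_filter.1 hi).2,
        Nat.add_sub_cancel]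
      simp [ne_comm]
    rw [sum_congr rfl hdown, sum_const, nsmul_eq_mul]
    rfl
  rw [totalInf_eq_sum_sum_filter, sum_congr rfl hx,
    sum_cube_comp_numOnes (fun k => k * if g (k - 1) ≠ g k then (1 : ℝ) else 0),
    sum_range_choose_mul_mul_eq, changeSet, sum_filter]
  simp [mul_assoc]

section PermSums

open Nat

variable {α : Type*} [DecidableEq α]

lemma exists_perm_apply_eq_of_ne {i j i' j' : α} (h : i ≠ j) (h' : i' ≠ j') :
    ∃ τ : Equiv.Perm α, τ i' = i ∧ τ j' = j := by
  set k := Equiv.swap i' i j'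
  have hki : k ≠ i := fun hk => h' <| (Equiv.swap i' i).injective <| by
    rw [Equiv.swap_apply_left]; exact hk.symm
  refine ⟨(Equiv.swap i' i).trans (Equiv.swap k j), ?_, ?_⟩
  · simp [Equiv.swap_apply_of_ne_of_ne (Ne.symm hki) h]
  · simp [k]

variable [Fintype α]

lemma sum_perm_apply (w : α → ℝ) (i : α) :
    ∑ σ : Equiv.Perm α, w (σ i) = (Fintype.card α - 1)! * ∑ a, w a := by
  have hind : ∀ j, ∑ σ : Equiv.Perm α, w (σ j) = ∑ σ : Equiv.Perm α, w (σ i) := fun j =>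
    Fintype.sum_equiv (Equiv.mulRight (Equiv.swap i j)) _ _ fun σ => by simp
  have hcard : (Fintype.card α : ℝ) ≠ 0 := by
    have : 0 < Fintype.card α := Fintype.card_pos_iff.2 ⟨i⟩
    positivity
  refine mul_left_cancel₀ hcard ?_
  calc (Fintype.card α : ℝ) * ∑ σ : Equiv.Perm α, w (σ i)
      = ∑ j, ∑ σ : Equiv.Perm α, w (σ j) := by simp [hind]
    _ = ∑ σ : Equiv.Perm α, ∑ a, w a := by
      rw [sum_comm]
      exact sum_congr rfl fun σ _ => Equiv.sum_comp σ w
    _ = Fintype.card α * ((Fintype.card α - 1)! * ∑ a, w a) := by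
      rw [sum_const, Finset.card_univ, Fintype.card_perm, nsmul_eq_mul, ← mul_assoc]
      norm_cast
      rw [Nat.mul_factorial_pred (Fintype.card_pos_iff.2 ⟨i⟩).ne']

lemma sum_perm_apply_mul_apply (w : α → ℝ) {i j : α} (hij : i ≠ j) :
    ∑ σ : Equiv.Perm α, w (σ i) * w (σ j) =
      (Fintype.card α - 2)! * ((∑ a, w a) ^ 2 - ∑ a, w a ^ 2) := by
  have hind : ∀ i', ∀ j' ∈ univ.erase i', ∑ σ : Equiv.Perm α, w (σ i') * w (σ j') =
      ∑ σ : Equiv.Perm α, w (σ i) * w (σ j) := fun i' j' hj' => by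
    obtain ⟨τ, hτi, hτj⟩ := exists_perm_apply_eq_of_ne (ne_of_mem_erase hj').symm hij
    exact Fintype.sum_equiv (Equiv.mulRight τ) _ _ fun σ => by simp [hτi, hτj]
  have hoff : ∀ σ : Equiv.Perm α, ∑ i', ∑ j' ∈ univ.erase i', w (σ i') * w (σ j') =
      (∑ a, w a) ^ 2 - ∑ a, w a ^ 2 := fun σ => by
    simp only [← mul_sum, sum_erase_eq_sub (mem_univ _), Equiv.sum_comp σ w,
      sum_sub_distrib, ← sum_mul, sq]
    rw [Equiv.sum_comp σ (fun a => w a * w a)]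
  obtain ⟨m, hm⟩ : ∃ m, Fintype.card α = m + 2 :=
    ⟨Fintype.card α - 2, by
      have := Fintype.one_lt_card_iff_nontrivial.2 ⟨⟨i, j, hij⟩⟩
      omega⟩
  have hcard : ((m + 2 : ℕ) * (m + 1 : ℕ) : ℝ) ≠ 0 := by positivity
  refine mul_left_cancel₀ hcard ?_
  calc ((m + 2 : ℕ) * (m + 1 : ℕ) : ℝ) * ∑ σ : Equiv.Perm α, w (σ i) * w (σ j)
      = ∑ i', ∑ j' ∈ univ.erase i', ∑ σ : Equiv.Perm α, w (σ i') * w (σ j') := by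
        rw [sum_congr rfl fun i' _ => sum_congr rfl (hind i')]
        simp [card_erase_of_mem, hm]
        ring
    _ = ∑ σ : Equiv.Perm α, ((∑ a, w a) ^ 2 - ∑ a, w a ^ 2) := by
        rw [sum_congr rfl fun i' _ => sum_comm, sum_comm]
        exact sum_congr rfl fun σ _ => hoff σ
    _ = _ := by
        rw [sum_const, Finset.card_univ, Fintype.card_perm, hm, nsmul_eq_mul]
        simp [Nat.factorial_succ]
        ring

end PermSums

section Signs

open Polynomial

lemma sgn_eq_sign (t : ℝ) : sgn t = (SignType.sign t : ℤ) := by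
  rw [sgn, sign_apply]
  split_ifs <;> rfl

lemma sgn_eq_sgn_iff {s t : ℝ} : sgn s = sgn t ↔ SignType.sign s = SignType.sign t := by
  rw [sgn_eq_sign, sgn_eq_sign]
  cases SignType.sign s <;> cases SignType.sign t <;> decide

lemma sgn_eq_zero_iff {t : ℝ} : sgn t = 0 ↔ t = 0 := by
  simpa [sgn] using sgn_eq_sgn_iff (s := t) (t := 0)

lemma sgn_sum_of_forall_sgn_eq {ι : Type*} {s : Finset ι} (hs : s.Nonempty) {t : ι → ℝ}
    {ε : ℤ} (h : ∀ i ∈ s, sgn (t i) = ε) : sgn (∑ i ∈ s, t i) = ε := by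
  obtain ⟨i₀, hi₀⟩ := hs
  rw [← h i₀ hi₀, sgn_eq_sgn_iff]
  exact sign_sum ⟨i₀, hi₀⟩ _ fun i hi => sgn_eq_sgn_iff.1 (by rw [h i hi, h i₀ hi₀])

lemma mul_neg_of_sgn_ne {a b : ℝ} (ha : sgn a ≠ 0) (hb : sgn b ≠ 0) (h : sgn a ≠ sgn b) :
    a * b < 0 := by
  simp only [sgn] at ha hb h
  split_ifs at ha hb h <;> first | contradiction | nlinarith

lemma exists_isRoot_mem_Ioo_of_eval_mul_eval_neg {p : ℝ[X]} {a b : ℝ} (hab : a ≤ b)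
    (h : p.eval a * p.eval b < 0) : ∃ r ∈ Set.Ioo a b, p.IsRoot r := by
  have hcont := p.continuous.continuousOn (s := Set.Icc a b)
  rcases mul_neg_iff.1 h with ⟨ha, hb⟩ | ⟨ha, hb⟩
  · exact intermediate_value_Ioo' hab hcont ⟨hb, ha⟩
  · exact intermediate_value_Ioo hab hcont ⟨ha, hb⟩

-- Each sign change along the monotone sequence `s` is witnessed by its own root of `p`.
lemma card_filter_eval_mul_eval_neg_le_natDegree {p : ℝ[X]} (hp : p ≠ 0) {s : ℕ → ℝ}
    (hs : Monotone s) (n : ℕ) :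
    #{k ∈ range n | p.eval (s k) * p.eval (s (k + 1)) < 0} ≤ p.natDegree := by
  have hroot : ∀ k, ∃ r, p.eval (s k) * p.eval (s (k + 1)) < 0 →
      r ∈ Set.Ioo (s k) (s (k + 1)) ∧ p.IsRoot r := fun k => by
    by_cases h : p.eval (s k) * p.eval (s (k + 1)) < 0
    · obtain ⟨r, hr, hroot⟩ := exists_isRoot_mem_Ioo_of_eval_mul_eval_neg (hs k.le_succ) h
      exact ⟨r, fun _ => ⟨hr, hroot⟩⟩
    · exact ⟨0, fun h' => absurd h' h⟩
  choose r hr using hroot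
  have hlt : ∀ k l, k < l → p.eval (s k) * p.eval (s (k + 1)) < 0 →
      p.eval (s l) * p.eval (s (l + 1)) < 0 → r k < r l := fun k l hkl hk hl =>
    ((hr k hk).1.2.trans_le (hs hkl)).trans (hr l hl).1.1
  calc #{k ∈ range n | p.eval (s k) * p.eval (s (k + 1)) < 0}
      ≤ #p.roots.toFinset := by
        refine card_le_card_of_injOn r (fun k hk => ?_) fun k hk l hl hkl => ?_
        · rw [mem_coe, mem_filter] at hk
          simpa [mem_roots hp] using (hr k hk.2).2
        · rw [mem_coe, mem_filter] at hk hl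
          by_contra hne
          rcases lt_or_gt_of_ne hne with h | h
          · exact (hlt k l h hk.2 hl.2).ne hkl
          · exact (hlt l k h hl.2 hk.2).ne' hkl
    _ ≤ Multiset.card p.roots := p.roots.toFinset_card_le
    _ ≤ p.natDegree := card_roots' p

end Signs

section Binomial

lemma choose_le_choose_of_le_of_le_half {n a b : ℕ} (hab : a ≤ b) (hb : b ≤ n / 2) :
    n.choose a ≤ n.choose b := by
  induction b, hab using Nat.le_induction with
  | base => rfl
  | succ b _ ih => exact (ih (by omega)).trans (Nat.choose_le_succ_of_lt_half_left (by omega))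

lemma choose_le_choose_pred_of_ne {t k : ℕ} (hk : k ≠ t) :
    (2 * t).choose k ≤ (2 * t).choose (t - 1) := by
  rcases lt_or_gt_of_ne hk with hlt | hgt
  · exact choose_le_choose_of_le_of_le_half (by omega) (by omega)
  rcases le_or_gt k (2 * t) with hle | hlt
  · rw [← Nat.choose_symm hle]
    exact choose_le_choose_of_le_of_le_half (by omega) (by omega)
  · simp [Nat.choose_eq_zero_of_lt hlt]

-- The two largest entries of row `m` of Pascal's triangle add up to the central entry of
-- row `m + 1`.
lemma choose_add_choose_le_of_ne {m k l : ℕ} (hkl : k ≠ l) :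
    m.choose k + m.choose l ≤ (m + 1).choose ((m + 1) / 2) := by
  obtain ⟨t, rfl | rfl⟩ := Nat.even_or_odd' m
  · wlog hk : k ≠ t generalizing k l
    · rw [add_comm]
      exact this hkl.symm (by omega)
    rw [show (2 * t + 1) / 2 = t by omega]
    rcases t with _ | s
    · rcases l with _ | l <;> simp [Nat.choose_eq_zero_of_lt (Nat.pos_of_ne_zero hk)]
    · have h1 := choose_le_choose_pred_of_ne hk
      have h2 := Nat.choose_le_middle l (2 * (s + 1))
      rw [show 2 * (s + 1) / 2 = s + 1 by omega] at h2
      rw [Nat.choose_succ_succ' (2 * (s + 1)) s]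
      simp only [Nat.add_sub_cancel] at h1
      omega
  · have hmid : ∀ j, (2 * t + 1).choose j ≤ (2 * t + 1).choose t := fun j => by
      simpa [show (2 * t + 1) / 2 = t by omega] using Nat.choose_le_middle j (2 * t + 1)
    rw [show (2 * t + 1 + 1) / 2 = t + 1 by omega, Nat.choose_succ_succ', Nat.choose_symm_half]
    exact add_le_add (hmid k) (hmid l)

lemma sum_choose_le_choose_succ_half (m : ℕ) {D : Finset ℕ} (hD : #D ≤ 2) :
    ∑ k ∈ D, m.choose k ≤ (m + 1).choose ((m + 1) / 2) := by
  obtain h | h | h : #D = 0 ∨ #D = 1 ∨ #D = 2 := by omega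
  · simp [card_eq_zero.1 h]
  · obtain ⟨k, rfl⟩ := card_eq_one.1 h
    simpa using (Nat.choose_le_succ m k).trans (Nat.choose_le_middle k (m + 1))
  · obtain ⟨k, l, hkl, rfl⟩ := card_eq_two.1 h
    simpa [sum_pair hkl] using choose_add_choose_le_of_ne hkl

lemma choose_half_le_two_mul_choose {n : ℕ} (hn : Even n) :
    n.choose (n / 2) ≤ 2 * n.choose ((n - 2) / 2) := by
  obtain ⟨r, rfl⟩ := hn
  rcases r with _ | s
  · simp
  rw [show (s + 1 + (s + 1)) / 2 = s + 1 by omega, show (s + 1 + (s + 1) - 2) / 2 = s by omega,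
    show s + 1 + (s + 1) = 2 * s + 1 + 1 by omega, Nat.choose_succ_succ', Nat.choose_symm_half,
    ← two_mul]
  exact Nat.mul_le_mul_left 2 (Nat.choose_le_succ _ _)

lemma sum_choose_pred_le_choose_half (n : ℕ) {D : Finset ℕ} (hD : #D ≤ 2) :
    ∑ k ∈ D, (n - 1).choose k ≤ n.choose (n / 2) := by
  rcases n with _ | m
  · simpa using sum_choose_le_choose_succ_half 0 hD
  · simpa using sum_choose_le_choose_succ_half m hD

end Binomial

section SymmetricQTF

open Polynomial Nat

variable {V : Type*} [Fintype V] [LinearOrder V]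

lemma exists_sum_perm_quadPoly_eq_eval (a : V → V → ℝ) (b : V → ℝ) (c : ℝ) :
    ∃ p : ℝ[X], p.natDegree ≤ 2 ∧ ∀ x ∈ cube V,
      ∑ σ : Equiv.Perm V, quadPoly a b c (x ∘ σ) = p.eval (∑ i, (x i : ℝ)) := by
  set n := Fintype.card V
  set A := ∑ i, ∑ j, if i < j then a i j else 0
  set B := ∑ i, b i
  refine ⟨C ((n - 2)! * A) * X ^ 2 + C ((n - 1)! * B) * X + C (n ! * c - (n - 2)! * A * n),
    natDegree_quadratic_le, fun x hx => ?_⟩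
  set S := ∑ i, (x i : ℝ)
  have hsq : ∑ i, (x i : ℝ) ^ 2 = n := by
    have : ∀ i, (x i : ℝ) ^ 2 = 1 := fun i => by rcases mem_cube.1 hx i with h | h <;> simp [h]
    simp [this, n]
  have hquad : ∑ σ : Equiv.Perm V, ∑ i, ∑ j,
      (if i < j then a i j * x (σ i) * x (σ j) else 0) = A * ((n - 2)! * (S ^ 2 - n)) := by
    rw [sum_comm, sum_congr rfl fun i _ => sum_comm, sum_mul, sum_congr rfl fun i _ => sum_mul ..]
    refine sum_congr rfl fun i _ => sum_congr rfl fun j _ => ?_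
    split_ifs with h
    · simp only [mul_assoc, ← mul_sum]
      rw [sum_perm_apply_mul_apply (fun u => (x u : ℝ)) h.ne, hsq]
    · simp
  have hlin : ∑ σ : Equiv.Perm V, ∑ i, b i * x (σ i) = B * ((n - 1)! * S) := by
    rw [sum_comm, sum_mul]
    exact sum_congr rfl fun i _ => by rw [← mul_sum, sum_perm_apply (fun u => (x u : ℝ))]
  simp only [quadPoly, Function.comp_apply, sum_add_distrib, hquad, hlin, sum_const,
    Finset.card_univ, Fintype.card_perm, nsmul_eq_mul, eval_add, eval_mul, eval_C, eval_X,
    eval_pow]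
  ring

lemma card_changeSet_le_two {f : (V → ℤ) → ℤ} {g : ℕ → ℤ}
    (hQTF : ∃ (a : V → V → ℝ) (b : V → ℝ) (c : ℝ),
      (∀ x ∈ cube V, quadPoly a b c x ≠ 0) ∧
      (∀ x ∈ cube V, f x = sgn (quadPoly a b c x)))
    (hsym : ∀ σ : Equiv.Perm V, ∀ x ∈ cube V, f (x ∘ σ) = f x)
    (hg : ∀ x ∈ cube V, f x = g (numOnes x)) :
    #(changeSet g (Fintype.card V)) ≤ 2 := by
  obtain ⟨a, b, c, hnz, hrep⟩ := hQTF
  obtain ⟨p, hdeg, hp⟩ := exists_sum_perm_quadPoly_eq_eval a b c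
  set s : ℕ → ℝ := fun k => 2 * k - Fintype.card V
  -- All the summands `quadPoly a b c (x ∘ σ)` have the sign `f x = g k`.
  have hsgn : ∀ k ≤ Fintype.card V, sgn (p.eval (s k)) = g k ∧ g k ≠ 0 := fun k hk => by
    obtain ⟨x, hx, rfl⟩ := exists_mem_cube_numOnes_eq hk
    have hterm : ∀ σ ∈ (univ : Finset (Equiv.Perm V)),
        sgn (quadPoly a b c (x ∘ σ)) = g (numOnes x) := fun σ _ => by rw [← hrep _ (comp_perm_mem_cube hx σ), hsym σ x hx, hg x hx]
    refine ⟨?_, ?_⟩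
    · rw [show s (numOnes x) = ∑ i, (x i : ℝ) from (sum_coe_eq_of_mem_cube hx).symm,
        ← hp x hx]
      exact sgn_sum_of_forall_sgn_eq univ_nonempty hterm
    · rw [← hg x hx, hrep x hx, Ne, sgn_eq_zero_iff]
      exact hnz x hx
  have hp0 : p ≠ 0 := by
    rintro rfl
    obtain ⟨h0, hg0⟩ := hsgn 0 (Nat.zero_le _)
    simp [sgn] at h0
    exact hg0 h0.symm
  calc #(changeSet g (Fintype.card V))
      ≤ #{k ∈ range (Fintype.card V) | p.eval (s k) * p.eval (s (k + 1)) < 0} := by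
        refine card_le_card fun k hk => ?_
        rw [mem_changeSet] at hk
        rw [mem_filter, mem_range]
        obtain ⟨h₁, h₁'⟩ := hsgn k hk.1.le
        obtain ⟨h₂, h₂'⟩ := hsgn (k + 1) hk.1
        exact ⟨hk.1, mul_neg_of_sgn_ne (h₁ ▸ h₁') (h₂ ▸ h₂') (by rw [h₁, h₂]; exact hk.2)⟩
    _ ≤ p.natDegree :=
        card_filter_eval_mul_eval_neg_le_natDegree hp0 (fun k l hkl => by simp only [s]; gcongr) _
    _ ≤ 2 := hdeg

end SymmetricQTF

/-- A symmetric QTF on `n` variables has total influence at most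
`n · 2^{-n+1} · C(n, (n-1)/2)` for odd `n`, and
`n · 2^{-n} · (2·C(n, (n-2)/2) + C(n, n/2))` for even `n`. -/
theorem symmetric_qtf_influence_bound {n : ℕ} (f : (Fin n → ℤ) → ℤ)
    (hQTF : ∃ (a : Fin n → Fin n → ℝ) (b : Fin n → ℝ) (c : ℝ),
      (∀ x ∈ cube (Fin n), quadPoly a b c x ≠ 0) ∧
      (∀ x ∈ cube (Fin n), f x = sgn (quadPoly a b c x)))
    (hsym : ∀ σ : Equiv.Perm (Fin n), ∀ x ∈ cube (Fin n), f (x ∘ σ) = f x) :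
    (Odd n →
      totalInf f ≤ (n : ℝ) * (n.choose ((n - 1) / 2) : ℝ) / 2 ^ (n - 1)) ∧
    (Even n →
      totalInf f ≤ (n : ℝ) * (2 * (n.choose ((n - 2) / 2) : ℝ) + (n.choose (n / 2) : ℝ))
        / 2 ^ n) := by
  obtain ⟨g, hg⟩ := exists_eq_comp_numOnes hsym
  have hchanges := card_changeSet_le_two hQTF hsym hg
  rw [Fintype.card_fin] at hchanges
  have hsum : ∑ k ∈ changeSet g n, ((n - 1).choose k : ℝ) ≤ n.choose (n / 2) := by
    exact_mod_cast sum_choose_pred_le_choose_half n hchanges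
  rw [totalInf_eq_of_eq_comp_numOnes hg, Fintype.card_fin]
  constructor
  · intro hn
    obtain ⟨t, rfl⟩ := hn
    rw [show (2 * t + 1 - 1) / 2 = (2 * t + 1) / 2 by omega, Nat.add_sub_cancel, pow_succ',
      mul_assoc, mul_div_mul_left _ _ two_ne_zero]
    gcongr
    simpa using hsum
  · intro hn
    have hhalf : (n.choose (n / 2) : ℝ) ≤ 2 * n.choose ((n - 2) / 2) := by
      exact_mod_cast choose_half_le_two_mul_choose hn
    rw [mul_comm 2 (n : ℝ), mul_assoc]
    gcongr
    linarith
end Influence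
end
end
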